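/- If the total effect of A on Y is not identified in MPDAG G (i.e., some proper possibly causal path from A to Y starts with an undirected edge), then there exists a shortest such path, and any shortest such path p = <A1, V1, ..., Y1> has the property that any edge in G between A1 and an interior node Vi (2 <= i <= k) is directed A1 -> Vi. -/

import Mathlib

/-- A partially directed graph: directed edges `dir` and undirected edges `undir`. -/
structure PDAG (V : Type) where
  dir : V → V → Prop
  undir : V → V → Prop
  undir_symm : ∀ a b, undir a b → undir b a

namespace PDAG

variable {V : Type}

/-- Two nodes are adjacent if joined by a directed or undirected edge. -/
def adj (G : PDAG V) (a b : V) : Prop := G.dir a b ∨ G.dir b a ∨ G.undir a b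

/-- Each pair of nodes is joined by at most one edge, and no self loops. -/
def Wellformed (G : PDAG V) : Prop :=
  (∀ a b, ¬ (G.dir a b ∧ G.dir b a)) ∧ (∀ a b, ¬ (G.dir a b ∧ G.undir a b)) ∧
  (∀ a, ¬ G.undir a a)

/-- No directed cycles. -/
def Acyclic (G : PDAG V) : Prop := ∀ a, ¬ Relation.TransGen G.dir a a

/-- Closure under Meek's orientation rules R1–R4. -/
def MeekClosed (G : PDAG V) : Prop :=
  (∀ a b c, G.dir a b → G.undir b c → ¬ G.adj a c → G.dir b c) ∧
  (∀ a b c, G.dir a c → G.dir c b → G.undir a b → G.dir a b) ∧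
  (∀ a b c d, G.undir a b → G.undir a c → G.undir a d → G.dir c b → G.dir d b →
    ¬ G.adj c d → G.dir a b) ∧
  (∀ a b c d, G.undir d a → G.undir d b → G.undir d c → G.dir a b → G.dir b c →
    ¬ G.adj a c → G.dir d c)

/-- A maximally oriented PDAG. -/
def IsMPDAG (G : PDAG V) : Prop := G.Wellformed ∧ G.Acyclic ∧ G.MeekClosed

/-- A DAG: acyclic, no undirected edges. -/
def IsDAG (G : PDAG V) : Prop := G.Wellformed ∧ G.Acyclic ∧ ∀ a b, ¬ G.undir a b

/-- A path: at least two distinct nodes, consecutive ones adjacent. -/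
def IsPath (G : PDAG V) (p : List V) : Prop :=
  2 ≤ p.length ∧ p.Nodup ∧ List.Chain' G.adj p

/-- Possibly causal path: no edge `Vi ← Vj` in `G` for `i < j` among the path's nodes. -/
def PossiblyCausal (G : PDAG V) (p : List V) : Prop :=
  p.Pairwise (fun a b => ¬ G.dir b a)

/-- Causal path: every consecutive edge directed forwards. -/
def Causal (G : PDAG V) (p : List V) : Prop := List.Chain' G.dir p

/-- Unshielded path: endpoints of every consecutive triple are nonadjacent. -/
def Unshielded (G : PDAG V) (p : List V) : Prop :=
  ∀ a b c, [a, b, c] <:+: p → ¬ G.adj a c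

/-- Proper path w.r.t. `A`: only the first node is in `A`. -/
def ProperFrom (A : Set V) (p : List V) : Prop :=
  ∃ a t, p = a :: t ∧ a ∈ A ∧ ∀ x ∈ t, x ∉ A

/-- The path ends in the set `Y`. -/
def EndsIn (p : List V) (Y : Set V) : Prop := ∃ y, p.getLast? = some y ∧ y ∈ Y

/-- The path starts with an undirected edge. -/
def StartsUndir (G : PDAG V) (p : List V) : Prop :=
  ∃ a b t, p = a :: b :: t ∧ G.undir a b

/-- The path starts with a directed edge. -/
def StartsDir (G : PDAG V) (p : List V) : Prop :=
  ∃ a b t, p = a :: b :: t ∧ G.dir a b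

/-- A proper possibly causal path from `A` to `Y`. -/
def PPCPath (G : PDAG V) (A Y : Set V) (p : List V) : Prop :=
  G.IsPath p ∧ G.PossiblyCausal p ∧ ProperFrom A p ∧ EndsIn p Y

/-- Perković's identifiability condition: every proper possibly causal path from `A`
to `Y` starts with a directed edge. -/
def IdCond (G : PDAG V) (A Y : Set V) : Prop :=
  ∀ p, G.PPCPath A Y p → G.StartsDir p

/-- A violating path: proper possibly causal from `A` to `Y` starting with an
undirected edge. -/
def ViolPath (G : PDAG V) (A Y : Set V) (p : List V) : Prop :=
  G.PPCPath A Y p ∧ G.StartsUndir p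

/-- A shortest violating path. -/
def ShortestViol (G : PDAG V) (A Y : Set V) (p : List V) : Prop :=
  G.ViolPath A Y p ∧ ∀ q, G.ViolPath A Y q → p.length ≤ q.length

/-- Same adjacencies. -/
def SameAdj (G' G : PDAG V) : Prop := ∀ a b, G'.adj a b ↔ G.adj a b

/-- Same unshielded colliders. -/
def SameUC (G' G : PDAG V) : Prop :=
  ∀ a b c, (G'.dir a b ∧ G'.dir c b ∧ ¬ G'.adj a c) ↔
    (G.dir a b ∧ G.dir c b ∧ ¬ G.adj a c)

/-- `G'` is represented by `G`: same adjacencies, same unshielded colliders, and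
every directed edge of `G` appears in `G'`. -/
def RepresentedBy (G' G : PDAG V) : Prop :=
  SameAdj G' G ∧ SameUC G' G ∧ ∀ a b, G.dir a b → G'.dir a b

/-- `G1 = MPDAG(G, {A1 → V1})`: the least maximally oriented graph represented by `G`
containing the orientation `A1 → V1`. -/
def IsOrientClosure (G : PDAG V) (A1 V1 : V) (G1 : PDAG V) : Prop :=
  G1.IsMPDAG ∧ RepresentedBy G1 G ∧ G1.dir A1 V1 ∧
  (∀ a b, G1.undir a b ↔ (G.adj a b ∧ ¬ G1.dir a b ∧ ¬ G1.dir b a)) ∧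
  (∀ H : PDAG V, H.IsMPDAG → RepresentedBy H G → H.dir A1 V1 →
    ∀ a b, G1.dir a b → H.dir a b)

end PDAG

/-
A shortest violating path exists because path lengths are well-ordered. If `A1` were adjacent
to a later node `Vi` (`i ≥ 2`), the edge cannot point into `A1` (the path is possibly causal),
and an undirected edge `A1 - Vi` would shortcut the path to `⟨A1, Vi, …, Y1⟩`, again proper,
possibly causal and starting with an undirected edge, but strictly shorter.
-/

theorem List.cons_drop_suffix_of_getElem? {α : Type*} {l : List α} {j : ℕ} {w : α}
    (h : l[j]? = some w) : w :: l.drop (j + 1) <:+ l := by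
  obtain ⟨hj, rfl⟩ := List.getElem?_eq_some_iff.mp h
  rw [List.getElem_cons_drop]
  exact List.drop_suffix j l

namespace PDAG

variable {V : Type} {G : PDAG V} {A Y : Set V}

theorem startsDir_or_startsUndir {p : List V} (hp : G.IsPath p) (hpc : G.PossiblyCausal p) :
    G.StartsDir p ∨ G.StartsUndir p := by
  obtain ⟨hlen, -, hchain⟩ := hp
  match p, hlen with
  | a :: b :: t, _ =>
    rcases (List.isChain_cons_cons.mp hchain).1 with h | h | h
    · exact .inl ⟨a, b, t, rfl, h⟩
    · exact absurd h ((List.pairwise_cons.mp hpc).1 b (by simp))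
    · exact .inr ⟨a, b, t, rfl, h⟩

theorem exists_violPath_of_not_idCond (h : ¬ G.IdCond A Y) : ∃ p, G.ViolPath A Y p := by
  simp only [IdCond, not_forall] at h
  obtain ⟨p, hp, hnd⟩ := h
  exact ⟨p, hp, (startsDir_or_startsUndir hp.1 hp.2.1).resolve_left hnd⟩

theorem exists_shortestViol (h : ∃ p, G.ViolPath A Y p) : ∃ p, G.ShortestViol A Y p := by
  obtain ⟨p, hp, hmin⟩ := exists_minimalFor_of_wellFoundedLT (G.ViolPath A Y) List.length h
  exact ⟨p, hp, fun q hq => (le_total _ _).elim id (hmin hq)⟩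

theorem endsIn_cons_cons {a b : V} {l : List V} : EndsIn (a :: b :: l) Y ↔ EndsIn (b :: l) Y := by
  simp only [EndsIn, List.getLast?_cons_cons]

theorem EndsIn.of_suffix {p s : List V} (hp : EndsIn p Y) (hs : s <:+ p) (hne : s ≠ []) :
    EndsIn s Y := by
  obtain ⟨y, hy, hyY⟩ := hp
  obtain ⟨pre, rfl⟩ := hs
  exact ⟨y, by rwa [List.getLast?_append_of_ne_nil _ hne] at hy, hyY⟩

theorem IsPath.shortcut {a w : V} {l s : List V} (hp : G.IsPath (a :: l)) (hs : w :: s <:+ l)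
    (haw : G.adj a w) : G.IsPath (a :: w :: s) :=
  ⟨by simp, hp.2.1.sublist (hs.sublist.cons_cons a),
    List.isChain_cons_cons.mpr ⟨haw, hp.2.2.tail.suffix hs⟩⟩

theorem PPCPath.shortcut {a w : V} {l s : List V} (hp : G.PPCPath A Y (a :: l))
    (hs : w :: s <:+ l) (haw : G.adj a w) : G.PPCPath A Y (a :: w :: s) := by
  obtain ⟨hpath, hpc, ⟨_, _, heq, haA, hl⟩, hend⟩ := hp
  obtain ⟨rfl, rfl⟩ := List.cons_eq_cons.mp heq
  refine ⟨hpath.shortcut hs haw, hpc.sublist (hs.sublist.cons_cons a),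
    ⟨a, w :: s, rfl, haA, fun x hx => hl x (hs.subset hx)⟩, ?_⟩
  exact endsIn_cons_cons.mpr
    (hend.of_suffix (hs.trans (List.suffix_cons a l)) (List.cons_ne_nil _ _))

theorem ShortestViol.dir_of_adj {a v w : V} {t s : List V}
    (hp : G.ShortestViol A Y (a :: v :: t)) (hs : w :: s <:+ t) (haw : G.adj a w) :
    G.dir a w := by
  obtain ⟨⟨hppc, -⟩, hmin⟩ := hp
  rcases haw with h | h | h
  · exact h
  · exact absurd h ((List.pairwise_cons.mp hppc.2.1).1 w (by simp [hs.subset List.mem_cons_self]))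
  · have hshort := hmin _
      ⟨hppc.shortcut (hs.trans (List.suffix_cons v t)) (.inr (.inr h)), a, w, s, rfl, h⟩
    have hlen := hs.length_le
    simp only [List.length_cons] at hshort hlen
    omega

end PDAG

theorem stmt18_general {V : Type} (G : PDAG V) (A Y : Set V)
    (hnid : ¬ G.IdCond A Y) :
    (∃ p, G.ShortestViol A Y p) ∧
    ∀ p A1 V1 t, p = A1 :: V1 :: t → G.ShortestViol A Y p →
      ∀ i w, 2 ≤ i → p[i]? = some w → G.adj A1 w → G.dir A1 w := by
  refine ⟨PDAG.exists_shortestViol (PDAG.exists_violPath_of_not_idCond hnid), ?_⟩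
  rintro p A1 V1 t rfl hp i w hi hiw hadj
  obtain ⟨j, rfl⟩ := Nat.exists_eq_add_of_le' hi
  exact hp.dir_of_adj (List.cons_drop_suffix_of_getElem? (by simpa using hiw)) hadj

/-- If the total effect of `A` on `Y` is not identified in MPDAG `G`, then a shortest
proper possibly causal path from `A` to `Y` starting with an undirected edge exists,
and along any such shortest path `p = ⟨A1, V1, …, Y1⟩`, any edge of `G` between `A1`
and a node `Vi` of `p` with `i ≥ 2` is directed `A1 → Vi`. -/
theorem stmt18 {V : Type} (G : PDAG V) (hG : G.IsMPDAG) (A Y : Set V)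
    (hAY : Disjoint A Y) (hnid : ¬ G.IdCond A Y) :
    (∃ p, G.ShortestViol A Y p) ∧
    ∀ p A1 V1 t, p = A1 :: V1 :: t → G.ShortestViol A Y p →
      ∀ i w, 2 ≤ i → p[i]? = some w → G.adj A1 w → G.dir A1 w :=
  stmt18_general G A Y hnid
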